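/- For any invertible matrix g ∈ GL_d(R) and unit vectors u, v ∈ R^d with ⟨u,v⟩ ≥ 0, the cocycle ρ(g, v̄) := log(‖gv‖) satisfies |ρ(g, ū) − ρ(g, v̄)| ≤ √2 · N(g)² · d(ū, v̄), where N(g) = max(‖g‖, ‖g⁻¹‖) and d is the angular distance on projective space. -/
import Mathlib


open scoped RealInnerProductSpace

noncomputable section

/-- Euclidean space `ℝ^d`. -/
abbrev E (d : ℕ) := EuclideanSpace ℝ (Fin d)

lemma log_sub_log_le_aux {a b : ℝ} (hb : 0 < b) (hab : b ≤ a) :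
    Real.log a - Real.log b ≤ (a - b) / b := by
  rw [← Real.log_div (by linarith) hb.ne']
  have h := Real.log_le_sub_one_of_pos (div_pos (lt_of_lt_of_le hb hab) hb)
  calc Real.log (a / b) ≤ a / b - 1 := h
    _ = (a - b) / b := by field_simp

lemma abs_log_sub_log_le_aux {a b m : ℝ} (hm : 0 < m) (hma : m ≤ a) (hmb : m ≤ b) :
    |Real.log a - Real.log b| ≤ |a - b| / m := by
  have ha : 0 < a := lt_of_lt_of_le hm hma
  have hb : 0 < b := lt_of_lt_of_le hm hmb
  rcases le_total b a with h | h
  · rw [abs_of_nonneg (sub_nonneg.2 (Real.log_le_log hb h)),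
      abs_of_nonneg (sub_nonneg.2 h)]
    calc Real.log a - Real.log b ≤ (a - b) / b := log_sub_log_le_aux hb h
      _ ≤ (a - b) / m := by gcongr <;> linarith
  · rw [abs_sub_comm, abs_sub_comm a b,
      abs_of_nonneg (sub_nonneg.2 (Real.log_le_log ha h)),
      abs_of_nonneg (sub_nonneg.2 h)]
    calc Real.log b - Real.log a ≤ (b - a) / a := log_sub_log_le_aux ha h
      _ ≤ (b - a) / m := by gcongr <;> linarith

/-- The group of invertible continuous linear maps of `ℝ^d` (i.e. `GL_d(ℝ)`),
with the operator norm on representatives. -/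
abbrev Gd (d : ℕ) := (E d →L[ℝ] E d)ˣ

/-- `N(g) = max(‖g‖, ‖g⁻¹‖)` (operator norms). -/
def Nnorm {d : ℕ} (g : Gd d) : ℝ :=
  max ‖(g : E d →L[ℝ] E d)‖ ‖((g⁻¹ : Gd d) : E d →L[ℝ] E d)‖

/-- Angular distance between the directions of unit vectors `u, v`. -/
def angDist {d : ℕ} (u v : E d) : ℝ :=
  Real.sqrt (1 - ⟪u, v⟫ ^ 2)

/-- For `g ∈ GL_d(ℝ)` and unit vectors `u, v` with `⟨u,v⟩ ≥ 0`, the cocycle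
`ρ(g, v̄) = log ‖gv‖` satisfies `|ρ(g,ū) − ρ(g,v̄)| ≤ √2 · N(g)² · d(ū,v̄)`. -/
theorem abs_log_sub_log_le_sqrt_two_mul_Nnorm_sq_mul_angDist
    {d : ℕ} (g : Gd d) (u v : E d)
    (hu : ‖u‖ = 1) (hv : ‖v‖ = 1) (huv : 0 ≤ ⟪u, v⟫) :
    |Real.log ‖(g : E d →L[ℝ] E d) u‖ - Real.log ‖(g : E d →L[ℝ] E d) v‖|
      ≤ Real.sqrt 2 * Nnorm g ^ 2 * angDist u v := by
  set A := (g : E d →L[ℝ] E d) with hA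
  set B := ((g⁻¹ : Gd d) : E d →L[ℝ] E d) with hB
  have key : ∀ w : E d, B (A w) = w := by
    intro w
    have h : B * A = 1 := g.inv_mul
    calc B (A w) = (B * A) w := rfl
      _ = w := by rw [h]; rfl
  -- lower bounds on ‖A u‖, ‖A v‖
  have hlow : ∀ w : E d, ‖w‖ = 1 → 1 ≤ ‖B‖ * ‖A w‖ := by
    intro w hw
    calc (1 : ℝ) = ‖w‖ := hw.symm
      _ = ‖B (A w)‖ := by rw [key]
      _ ≤ ‖B‖ * ‖A w‖ := B.le_opNorm _
  have hBu := hlow u hu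
  have hBv := hlow v hv
  have hBpos : 0 < ‖B‖ := by
    nlinarith [norm_nonneg B, norm_nonneg (A u)]
  have hmu : ‖B‖⁻¹ ≤ ‖A u‖ := by
    rw [inv_le_iff_one_le_mul₀ hBpos] at *
    linarith [hBu]
  have hmv : ‖B‖⁻¹ ≤ ‖A v‖ := by
    rw [inv_le_iff_one_le_mul₀ hBpos] at *
    linarith [hBv]
  -- norm difference bound
  have hdiff : |‖A u‖ - ‖A v‖| ≤ ‖A‖ * ‖u - v‖ := by
    calc |‖A u‖ - ‖A v‖| ≤ ‖A u - A v‖ := abs_norm_sub_norm_le _ _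
      _ = ‖A (u - v)‖ := by rw [map_sub]
      _ ≤ ‖A‖ * ‖u - v‖ := A.le_opNorm _
  -- ‖u - v‖ ≤ √2 * angDist u v
  have ht1 : ⟪u, v⟫ ≤ 1 := by
    calc ⟪u, v⟫ ≤ ‖u‖ * ‖v‖ := real_inner_le_norm u v
      _ = 1 := by rw [hu, hv]; ring
  have hsq : ‖u - v‖ ^ 2 ≤ 2 * (1 - ⟪u, v⟫ ^ 2) := by
    have h := @norm_sub_sq_real (E d) _ _ u v
    rw [hu, hv] at h
    nlinarith [huv, ht1]
  have hnd : ‖u - v‖ ≤ Real.sqrt 2 * angDist u v := by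
    rw [angDist, ← Real.sqrt_mul (by norm_num : (0:ℝ) ≤ 2)]
    have : ‖u - v‖ = Real.sqrt (‖u - v‖ ^ 2) := by
      rw [Real.sqrt_sq (norm_nonneg _)]
    rw [this]
    exact Real.sqrt_le_sqrt hsq
  -- combine
  have hmain : |Real.log ‖A u‖ - Real.log ‖A v‖| ≤ ‖A‖ * ‖B‖ * ‖u - v‖ := by
    calc |Real.log ‖A u‖ - Real.log ‖A v‖|
        ≤ |‖A u‖ - ‖A v‖| / ‖B‖⁻¹ :=
          abs_log_sub_log_le_aux (inv_pos.2 hBpos) hmu hmv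
      _ = |‖A u‖ - ‖A v‖| * ‖B‖ := by rw [div_eq_mul_inv, inv_inv]
      _ ≤ (‖A‖ * ‖u - v‖) * ‖B‖ := by gcongr
      _ = ‖A‖ * ‖B‖ * ‖u - v‖ := by ring
  have hAN : ‖A‖ ≤ Nnorm g := le_max_left _ _
  have hBN : ‖B‖ ≤ Nnorm g := le_max_right _ _
  have hN0 : 0 ≤ Nnorm g := (norm_nonneg A).trans hAN
  have hang0 : 0 ≤ angDist u v := Real.sqrt_nonneg _
  calc |Real.log ‖A u‖ - Real.log ‖A v‖|
      ≤ ‖A‖ * ‖B‖ * ‖u - v‖ := hmain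
    _ ≤ ‖A‖ * ‖B‖ * (Real.sqrt 2 * angDist u v) := by
        apply mul_le_mul_of_nonneg_left hnd
        positivity
    _ ≤ Nnorm g * Nnorm g * (Real.sqrt 2 * angDist u v) := by
        apply mul_le_mul_of_nonneg_right _ (by positivity)
        exact mul_le_mul hAN hBN (norm_nonneg B) hN0
    _ = Real.sqrt 2 * Nnorm g ^ 2 * angDist u v := by ring
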